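/- Let A, B and C be (bi)graded k-algebras. The following two conditions are equivalent: (1) C ≅ A #_R B as (bi)graded algebras for some (bi)graded k-linear map R : B ⊗ A → A ⊗ B making A #_R B an R-smash product; (2) there exist (bi)graded algebra homomorphisms f_A : A → C and f_B : B → C such that m_C ∘ (f_A ⊗ f_B) : A ⊗ B → C is an isomorphism of (bi)graded vector spaces, where m_C is the multiplication of C. In this case, R = (m_C ∘ (f_A ⊗ f_B))^{-1} ∘ m_C ∘ (f_B ⊗ f_A). -/

import Mathlib

open CategoryTheory Abelian DirectSum
open scoped TensorProduct DirectSum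

noncomputable section

section Smash
variable (k : Type) [Field k] {A B C : Type*}
  [Ring A] [Algebra k A] [Ring B] [Algebra k B] [Ring C] [Algebra k C]

/-- The multiplication `(m_A ⊗ m_B) ∘ (id_A ⊗ R ⊗ id_B)` on `A ⊗ B` determined by a
braiding map `R : B ⊗ A → A ⊗ B`, as a map on the tensor square. -/
def smashMulMap (R : B ⊗[k] A →ₗ[k] A ⊗[k] B) :
    (A ⊗[k] B) ⊗[k] (A ⊗[k] B) →ₗ[k] A ⊗[k] B :=
  (TensorProduct.map (LinearMap.mul' k A) (LinearMap.mul' k B)).comp <|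
    ((TensorProduct.assoc k A A (B ⊗[k] B)).symm.toLinearMap).comp <|
      (TensorProduct.map LinearMap.id (TensorProduct.assoc k A B B).toLinearMap).comp <|
        (TensorProduct.map LinearMap.id (TensorProduct.map R LinearMap.id)).comp <|
          (TensorProduct.map LinearMap.id
            (TensorProduct.assoc k B A B).symm.toLinearMap).comp
            (TensorProduct.assoc k A B (A ⊗[k] B)).toLinearMap

/-- The multiplication of the smash product `A #_R B`. -/
def smashMul (R : B ⊗[k] A →ₗ[k] A ⊗[k] B) (x y : A ⊗[k] B) : A ⊗[k] B :=
  smashMulMap k R (x ⊗ₜ y)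

/-- `A #_R B` is an `R`-smash product: the multiplication determined by `R` is
associative with unit `1 ⊗ 1`. -/
def IsSmashProduct (R : B ⊗[k] A →ₗ[k] A ⊗[k] B) : Prop :=
  (∀ x y z : A ⊗[k] B, smashMul k R (smashMul k R x y) z = smashMul k R x (smashMul k R y z)) ∧
  (∀ x : A ⊗[k] B, smashMul k R ((1 : A) ⊗ₜ (1 : B)) x = x) ∧
  (∀ x : A ⊗[k] B, smashMul k R x ((1 : A) ⊗ₜ (1 : B)) = x)

/-- The normality condition `R(b ⊗ 1) = 1 ⊗ b`, `R(1 ⊗ a) = a ⊗ 1`. -/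
def IsNormal (R : B ⊗[k] A →ₗ[k] A ⊗[k] B) : Prop :=
  (∀ b : B, R (b ⊗ₜ 1) = 1 ⊗ₜ b) ∧ (∀ a : A, R (1 ⊗ₜ a) = a ⊗ₜ 1)

/-- The induced grading on a tensor product of graded vector spaces. -/
def tensorGrading {ι : Type} [AddCommMonoid ι]
    (𝒜 : ι → Submodule k A) (ℬ : ι → Submodule k B) (d : ι) : Submodule k (A ⊗[k] B) :=
  ⨆ (p : ι × ι) (_ : p.1 + p.2 = d),
    LinearMap.range (TensorProduct.map (𝒜 p.1).subtype (ℬ p.2).subtype)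

/-- `e : A ⊗ B ≃ C` realizes `C` as the smash product `A #_R B`, as graded algebras. -/
def IsSmashIso {ι : Type} [AddCommMonoid ι]
    (𝒜 : ι → Submodule k A) (ℬ : ι → Submodule k B) (𝒞 : ι → Submodule k C)
    (R : B ⊗[k] A →ₗ[k] A ⊗[k] B) (e : A ⊗[k] B ≃ₗ[k] C) : Prop :=
  e ((1 : A) ⊗ₜ (1 : B)) = 1 ∧
  (∀ x y : A ⊗[k] B, e (smashMul k R x y) = e x * e y) ∧
  (∀ d, (tensorGrading k 𝒜 ℬ d).map e.toLinearMap = 𝒞 d)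

end Smash

/-- The map `m_C ∘ (f_A ⊗ f_B) : A ⊗ B → C`. -/
def mulComp {k : Type} [Field k] {A B C : Type}
    [Ring A] [Algebra k A] [Ring B] [Algebra k B] [Ring C] [Algebra k C]
    (fA : A →ₐ[k] C) (fB : B →ₐ[k] C) : A ⊗[k] B →ₗ[k] C :=
  (LinearMap.mul' k C).comp (TensorProduct.map fA.toLinearMap fB.toLinearMap)

/-!
Given a smash product structure, normality of `R` (forced by the unit axioms) makes
`a ↦ a ⊗ 1` and `b ↦ 1 ⊗ b` algebra maps, and `(a ⊗ 1)(1 ⊗ b) = a ⊗ b`, so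
`m_C ∘ (f_A ⊗ f_B)` is the given isomorphism. Conversely, if `φ = m_C ∘ (f_A ⊗ f_B)` is
bijective, `R := φ⁻¹ ∘ m_C ∘ (f_B ⊗ f_A)` makes `φ` multiplicative for the smash
multiplication, and associativity and unitality are transported from `C` along `φ`.
-/

open TensorProduct LinearMap Function

section SmashProduct

variable {k : Type} [Field k] {A B C : Type}
  [Ring A] [Algebra k A] [Ring B] [Algebra k B] [Ring C] [Algebra k C]

section Multiplication

variable {R : B ⊗[k] A →ₗ[k] A ⊗[k] B}

theorem smashMul_tmul (a a' : A) (b b' : B) :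
    smashMul k R (a ⊗ₜ b) (a' ⊗ₜ b') = map (mulLeft k a) (mulRight k b') (R (b ⊗ₜ a')) := by
  simp only [smashMul, smashMulMap, LinearMap.comp_apply, LinearEquiv.coe_coe, assoc_tmul,
    map_tmul, id_coe, id_eq, assoc_symm_tmul]
  generalize R (b ⊗ₜ a') = z
  induction z using TensorProduct.induction_on with
  | zero => simp only [zero_tmul, tmul_zero, map_zero]
  | tmul x y =>
    simp only [map_tmul, assoc_tmul, assoc_symm_tmul, mul'_apply, mulLeft_apply, mulRight_apply]
  | add x y hx hy => simp only [add_tmul, tmul_add, map_add, hx, hy]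

theorem smashMul_one_tmul_tmul_one (a : A) (b : B) :
    smashMul k R (1 ⊗ₜ b) (a ⊗ₜ 1) = R (b ⊗ₜ a) := by
  rw [smashMul_tmul, mulLeft_one, mulRight_one, TensorProduct.map_id, LinearMap.id_apply]

theorem IsSmashProduct.isNormal (hR : IsSmashProduct k R) : IsNormal k R :=
  ⟨fun b => by rw [← smashMul_one_tmul_tmul_one, hR.2.2],
    fun a => by rw [← smashMul_one_tmul_tmul_one, hR.2.1]⟩

theorem IsNormal.smashMul_tmul_one (hR : IsNormal k R) (a a' : A) :
    smashMul k R (a ⊗ₜ 1) (a' ⊗ₜ 1) = (a * a') ⊗ₜ (1 : B) := by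
  rw [smashMul_tmul, hR.2, map_tmul, mulLeft_apply, mulRight_apply, mul_one]

theorem IsNormal.smashMul_one_tmul (hR : IsNormal k R) (b b' : B) :
    smashMul k R (1 ⊗ₜ b) (1 ⊗ₜ b') = (1 : A) ⊗ₜ (b * b') := by
  rw [smashMul_tmul, hR.1, map_tmul, mulLeft_apply, mulRight_apply, one_mul]

theorem IsNormal.smashMul_tmul_one_one_tmul (hR : IsNormal k R) (a : A) (b : B) :
    smashMul k R (a ⊗ₜ 1) (1 ⊗ₜ b) = a ⊗ₜ b := by
  rw [smashMul_tmul, hR.1, map_tmul, mulLeft_apply, mulRight_apply, mul_one, one_mul]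

theorem isSmashProduct_of_injective {φ : A ⊗[k] B →ₗ[k] C} (hφ : Injective φ)
    (h_one : φ (1 ⊗ₜ 1) = 1) (h_mul : ∀ x y, φ (smashMul k R x y) = φ x * φ y) :
    IsSmashProduct k R :=
  ⟨fun x y z => hφ (by rw [h_mul, h_mul, h_mul, h_mul, mul_assoc]),
    fun x => hφ (by rw [h_mul, h_one, one_mul]),
    fun x => hφ (by rw [h_mul, h_one, mul_one])⟩

end Multiplication

section Grading

variable {ι : Type} [AddCommMonoid ι] (𝒜 : ι → Submodule k A) (ℬ : ι → Submodule k B)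

theorem tmul_mem_tensorGrading {p q d : ι} (hpq : p + q = d) {a : A} (ha : a ∈ 𝒜 p) {b : B}
    (hb : b ∈ ℬ q) : a ⊗ₜ b ∈ tensorGrading k 𝒜 ℬ d :=
  Submodule.mem_iSup_of_mem (p, q) <| Submodule.mem_iSup_of_mem hpq
    ⟨(⟨a, ha⟩ : 𝒜 p) ⊗ₜ (⟨b, hb⟩ : ℬ q), rfl⟩

theorem tensorGrading_le {d : ι} {S : Submodule k (A ⊗[k] B)}
    (h : ∀ p q, p + q = d → ∀ a ∈ 𝒜 p, ∀ b ∈ ℬ q, a ⊗ₜ b ∈ S) :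
    tensorGrading k 𝒜 ℬ d ≤ S := by
  refine iSup₂_le fun p hpq => ?_
  rintro _ ⟨t, rfl⟩
  induction t using TensorProduct.induction_on with
  | zero => simpa only [map_zero] using S.zero_mem
  | tmul a b => exact h p.1 p.2 hpq a.1 a.2 b.1 b.2
  | add u v hu hv => simpa only [map_add] using S.add_mem hu hv

end Grading

section Decomposition

variable {ι : Type} [AddCommMonoid ι] {𝒜 : ι → Submodule k A} {ℬ : ι → Submodule k B}
  {𝒞 : ι → Submodule k C} {R : B ⊗[k] A →ₗ[k] A ⊗[k] B} {e : A ⊗[k] B ≃ₗ[k] C}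

def IsSmashIso.includeLeft (he : IsSmashIso k 𝒜 ℬ 𝒞 R e) (hR : IsNormal k R) : A →ₐ[k] C :=
  AlgHom.ofLinearMap (e.toLinearMap ∘ₗ (TensorProduct.mk k A B).flip 1) he.1
    fun a a' => by
      change e ((a * a') ⊗ₜ 1) = e (a ⊗ₜ 1) * e (a' ⊗ₜ 1)
      rw [← he.2.1, hR.smashMul_tmul_one]

def IsSmashIso.includeRight (he : IsSmashIso k 𝒜 ℬ 𝒞 R e) (hR : IsNormal k R) : B →ₐ[k] C :=
  AlgHom.ofLinearMap (e.toLinearMap ∘ₗ TensorProduct.mk k A B 1) he.1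
    fun b b' => by
      change e (1 ⊗ₜ (b * b')) = e (1 ⊗ₜ b) * e (1 ⊗ₜ b')
      rw [← he.2.1, hR.smashMul_one_tmul]

variable (he : IsSmashIso k 𝒜 ℬ 𝒞 R e) (hR : IsNormal k R)

theorem IsSmashIso.mulComp_includeLeft_includeRight :
    mulComp (he.includeLeft hR) (he.includeRight hR) = e.toLinearMap :=
  TensorProduct.ext' fun a b =>
    (he.2.1 (a ⊗ₜ 1) (1 ⊗ₜ b)).symm.trans (congrArg e (hR.smashMul_tmul_one_one_tmul a b))

theorem IsSmashIso.map_includeLeft_le [SetLike.GradedOne ℬ] (i : ι) :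
    (𝒜 i).map (he.includeLeft hR).toLinearMap ≤ 𝒞 i := by
  rintro _ ⟨a, ha, rfl⟩
  rw [← he.2.2 i]
  exact ⟨a ⊗ₜ 1, tmul_mem_tensorGrading 𝒜 ℬ (add_zero i) ha SetLike.GradedOne.one_mem, rfl⟩

theorem IsSmashIso.map_includeRight_le [SetLike.GradedOne 𝒜] (i : ι) :
    (ℬ i).map (he.includeRight hR).toLinearMap ≤ 𝒞 i := by
  rintro _ ⟨b, hb, rfl⟩
  rw [← he.2.2 i]
  exact ⟨1 ⊗ₜ b, tmul_mem_tensorGrading 𝒜 ℬ (zero_add i) SetLike.GradedOne.one_mem hb, rfl⟩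

end Decomposition

section Construction

variable (fA : A →ₐ[k] C) (fB : B →ₐ[k] C)

theorem mulComp_tmul (a : A) (b : B) : mulComp fA fB (a ⊗ₜ b) = fA a * fB b := rfl

theorem mulComp_map_mulLeft_mulRight (a : A) (b : B) (z : A ⊗[k] B) :
    mulComp fA fB (map (mulLeft k a) (mulRight k b) z) = fA a * mulComp fA fB z * fB b := by
  induction z using TensorProduct.induction_on with
  | zero => simp only [map_zero, mul_zero, zero_mul]
  | tmul x y =>
    simp only [map_tmul, mulLeft_apply, mulRight_apply, mulComp_tmul, map_mul, mul_assoc]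
  | add x y hx hy => simp only [map_add, hx, hy, mul_add, add_mul]

/-- `φ((a ⊗ b)(a' ⊗ b')) = f_A(a) φ(R(b ⊗ a')) f_B(b') = f_A(a) f_B(b) f_A(a') f_B(b')`. -/
theorem mulComp_smashMul {R : B ⊗[k] A →ₗ[k] A ⊗[k] B}
    (hR : mulComp fA fB ∘ₗ R = mulComp fB fA) (x y : A ⊗[k] B) :
    mulComp fA fB (smashMul k R x y) = mulComp fA fB x * mulComp fA fB y := by
  have hbilin : mulComp fA fB ∘ₗ smashMulMap k R =
      LinearMap.mul' k C ∘ₗ map (mulComp fA fB) (mulComp fA fB) :=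
    ext_fourfold' fun a b a' b' => by
      change mulComp fA fB (smashMul k R (a ⊗ₜ b) (a' ⊗ₜ b')) = _
      rw [smashMul_tmul, mulComp_map_mulLeft_mulRight, ← LinearMap.comp_apply (mulComp fA fB),
        hR]
      simp only [LinearMap.comp_apply, map_tmul, mul'_apply, mulComp_tmul, mul_assoc]
  exact LinearMap.congr_fun hbilin (x ⊗ₜ y)

variable {fA fB} (hbij : Bijective (mulComp fA fB))

def smashBraiding : B ⊗[k] A →ₗ[k] A ⊗[k] B :=
  (LinearEquiv.ofBijective (mulComp fA fB) hbij).symm.toLinearMap ∘ₗ mulComp fB fA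

theorem mulComp_comp_smashBraiding : mulComp fA fB ∘ₗ smashBraiding hbij = mulComp fB fA :=
  LinearMap.ext fun _ => (LinearEquiv.ofBijective (mulComp fA fB) hbij).apply_symm_apply _

theorem isSmashProduct_smashBraiding : IsSmashProduct k (smashBraiding hbij) :=
  isSmashProduct_of_injective hbij.1 (by simp only [mulComp_tmul, map_one, mul_one])
    (mulComp_smashMul fA fB (mulComp_comp_smashBraiding hbij))

variable {ι : Type} [AddCommMonoid ι] {𝒜 : ι → Submodule k A} {ℬ : ι → Submodule k B}
  {𝒞 : ι → Submodule k C}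

theorem isSmashIso_smashBraiding
    (hgr : ∀ d, (tensorGrading k 𝒜 ℬ d).map (mulComp fA fB) = 𝒞 d) :
    IsSmashIso k 𝒜 ℬ 𝒞 (smashBraiding hbij) (LinearEquiv.ofBijective (mulComp fA fB) hbij) :=
  ⟨by simp only [LinearEquiv.ofBijective_apply, mulComp_tmul, map_one, mul_one],
    mulComp_smashMul fA fB (mulComp_comp_smashBraiding hbij), hgr⟩

theorem map_smashBraiding_tensorGrading_le [SetLike.GradedMul 𝒞]
    (hA : ∀ i, (𝒜 i).map fA.toLinearMap ≤ 𝒞 i) (hB : ∀ i, (ℬ i).map fB.toLinearMap ≤ 𝒞 i)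
    (hgr : ∀ d, (tensorGrading k 𝒜 ℬ d).map (mulComp fA fB) = 𝒞 d) (d : ι) :
    (tensorGrading k ℬ 𝒜 d).map (smashBraiding hbij) ≤ tensorGrading k 𝒜 ℬ d := by
  refine Submodule.map_le_iff_le_comap.2 <| tensorGrading_le ℬ 𝒜 fun p q hpq b hb a ha => ?_
  have hmem : fB b * fA a ∈ 𝒞 d :=
    hpq ▸ SetLike.GradedMul.mul_mem (hB p ⟨b, hb, rfl⟩) (hA q ⟨a, ha, rfl⟩)
  rw [← hgr d] at hmem
  exact (Submodule.mem_map_equiv (e := LinearEquiv.ofBijective _ hbij) _).1 hmem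

end Construction

end SmashProduct

/-- **Statement 2** (Caenepeel–Ionescu–Militaru–Zhang, Theorem 2.10).
For (bi)graded algebras `A`, `B`, `C` (graded by an arbitrary additive index monoid `ι`,
which covers both the graded case `ι = ℤ` and the bigraded case `ι = ℤ × ℤ`), the following
are equivalent:
(1) `C ≅ A #_R B` as graded algebras for some graded linear map `R : B ⊗ A → A ⊗ B`
making `A #_R B` an `R`-smash product;
(2) there are graded algebra maps `f_A : A → C`, `f_B : B → C` such that
`m_C ∘ (f_A ⊗ f_B) : A ⊗ B → C` is an isomorphism of graded vector spaces.
In this case `R = (m_C ∘ (f_A ⊗ f_B))⁻¹ ∘ m_C ∘ (f_B ⊗ f_A)`, i.e.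
`(m_C ∘ (f_A ⊗ f_B)) ∘ R = m_C ∘ (f_B ⊗ f_A)`. -/
theorem statement_2 {k : Type} [Field k] {ι : Type} [AddCommMonoid ι] [DecidableEq ι]
    {A B C : Type} [Ring A] [Algebra k A] [Ring B] [Algebra k B] [Ring C] [Algebra k C]
    (𝒜 : ι → Submodule k A) (ℬ : ι → Submodule k B) (𝒞 : ι → Submodule k C)
    (gA : GradedAlgebra 𝒜) (gB : GradedAlgebra ℬ) (gC : GradedAlgebra 𝒞) :
    ((∃ R : B ⊗[k] A →ₗ[k] A ⊗[k] B,
        (∀ d, (tensorGrading k ℬ 𝒜 d).map R ≤ tensorGrading k 𝒜 ℬ d) ∧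
        IsSmashProduct k R ∧
        ∃ e : A ⊗[k] B ≃ₗ[k] C, IsSmashIso k 𝒜 ℬ 𝒞 R e) ↔
      (∃ (fA : A →ₐ[k] C) (fB : B →ₐ[k] C),
        (∀ i, (𝒜 i).map fA.toLinearMap ≤ 𝒞 i) ∧
        (∀ i, (ℬ i).map fB.toLinearMap ≤ 𝒞 i) ∧
        Function.Bijective (mulComp fA fB) ∧
        ∀ d, (tensorGrading k 𝒜 ℬ d).map (mulComp fA fB) = 𝒞 d)) ∧
    (∀ (fA : A →ₐ[k] C) (fB : B →ₐ[k] C),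
        (∀ i, (𝒜 i).map fA.toLinearMap ≤ 𝒞 i) →
        (∀ i, (ℬ i).map fB.toLinearMap ≤ 𝒞 i) →
        (hbij : Function.Bijective (mulComp fA fB)) →
        (∀ d, (tensorGrading k 𝒜 ℬ d).map (mulComp fA fB) = 𝒞 d) →
        ∃ R : B ⊗[k] A →ₗ[k] A ⊗[k] B,
          (∀ d, (tensorGrading k ℬ 𝒜 d).map R ≤ tensorGrading k 𝒜 ℬ d) ∧
          IsSmashProduct k R ∧
          IsSmashIso k 𝒜 ℬ 𝒞 R (LinearEquiv.ofBijective (mulComp fA fB) hbij) ∧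
          (mulComp fA fB).comp R = mulComp fB fA) := by
  have := gA; have := gB; have := gC
  refine ⟨⟨?_, ?_⟩, fun fA fB hA hB hbij hgr => ⟨smashBraiding hbij,
    map_smashBraiding_tensorGrading_le hbij hA hB hgr, isSmashProduct_smashBraiding hbij,
    isSmashIso_smashBraiding hbij hgr, mulComp_comp_smashBraiding hbij⟩⟩
  · rintro ⟨R, -, hR, e, he⟩
    have hφ := he.mulComp_includeLeft_includeRight hR.isNormal
    refine ⟨he.includeLeft hR.isNormal, he.includeRight hR.isNormal,
      he.map_includeLeft_le hR.isNormal, he.map_includeRight_le hR.isNormal, ?_, ?_⟩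
    · rw [hφ]
      exact e.bijective
    · rw [hφ]
      exact he.2.2
  · rintro ⟨fA, fB, hA, hB, hbij, hgr⟩
    exact ⟨smashBraiding hbij, map_smashBraiding_tensorGrading_le hbij hA hB hgr,
      isSmashProduct_smashBraiding hbij, _, isSmashIso_smashBraiding hbij hgr⟩

end
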